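/- arXiv:1506.08674 — 5 statements merged into one kernel-verified Lean document; each statement's English description precedes it below -/
import Mathlib

section
/- Let p be an irreducible stochastic routing matrix on nodes {0,1,...,d} with p(i,i)=0, arrival rates λ_j = p(0,j), service rates μ_j = Σ_k p(j,k), routing probabilities r(i,j) = p(i,j)/μ_j, and total arrival rates ν given by the unique solution of ν = λ + rᵀν. If the stability condition ρ_i = ν_i/μ_i < 1 holds for all i ∈ {1,...,d}, then the input/output ratio r = (Σ_{j=1}^d p(0,j)) / (Σ_{j=1}^d p(j,0)) satisfies r < 1. -/
/-!
Summing the traffic equations over the internal nodes, the flow routed between internal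
nodes cancels and the total external input `∑ⱼ p(0,j)` equals `∑ₖ ρₖ p(k,0)`. Hence `r` is
the average of the utilizations `ρₖ < 1` weighted by `p(k,0)`. Irreducibility makes every
service rate positive, so that `ρₖ μₖ = νₖ`.
-/

open Finset

namespace Matrix

variable {ι R : Type*} [Fintype ι] [DecidableEq ι] [Semiring R]

theorem pow_apply_eq_zero_of_row_eq_zero {p : Matrix ι ι R} {k : ι} (hk : ∀ j, p k j = 0)
    {j : ι} (hkj : k ≠ j) (n : ℕ) : (p ^ n) k j = 0 := by
  cases n with
  | zero => simp [one_apply_ne hkj]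
  | succ n => simp [pow_succ', mul_apply, hk]

theorem sum_row_pos_of_irreducible {p : Matrix ι ι ℝ} (hnn : ∀ i j, 0 ≤ p i j)
    (hirr : ∀ i j, ∃ n : ℕ, 0 < (p ^ n) i j) {k j : ι} (hkj : k ≠ j) : 0 < ∑ l, p k l := by
  refine (sum_nonneg fun l _ => hnn k l).lt_of_ne fun hzero => ?_
  have hrow : ∀ l, p k l = 0 :=
    fun l => (sum_eq_zero_iff_of_nonneg fun l _ => hnn k l).1 hzero.symm l (mem_univ l)
  obtain ⟨n, hn⟩ := hirr k j
  exact hn.ne' (pow_apply_eq_zero_of_row_eq_zero hrow hkj n)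

end Matrix

theorem sum_mul_div_sum_lt_one {ι : Type*} (s : Finset ι) (ρ w : ι → ℝ)
    (hw : ∀ i ∈ s, 0 ≤ w i) (hρ : ∀ i ∈ s, ρ i < 1) :
    (∑ i ∈ s, ρ i * w i) / ∑ i ∈ s, w i < 1 := by
  rcases (sum_nonneg hw).eq_or_lt with hzero | hpos
  -- all weights vanish: the quotient is `0 / 0 = 0`
  · simp [← hzero]
  obtain ⟨i, hi, hwi⟩ : ∃ i ∈ s, 0 < w i := exists_lt_of_sum_lt (by simpa using hpos)
  rw [div_lt_one hpos]
  refine sum_lt_sum (fun j hj => ?_) ⟨i, hi, ?_⟩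
  · nlinarith [hw j hj, hρ j hj]
  · nlinarith [hρ i hi]

theorem sum_inflow_eq_sum_utilization_mul_outflow {ι : Type*} [Fintype ι] [DecidableEq ι]
    (o : ι) (p : Matrix ι ι ℝ) (μ ν : ι → ℝ) (hμ : ∀ j, μ j = ∑ k, p j k)
    (hμ0 : ∀ k, k ≠ o → μ k ≠ 0)
    (htraffic : ∀ j, j ≠ o → ν j = p o j + ∑ k ∈ univ.filter (· ≠ o), p k j / μ k * ν k) :
    ∑ j ∈ univ.filter (· ≠ o), p o j = ∑ k ∈ univ.filter (· ≠ o), ν k / μ k * p k o := by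
  set S := univ.filter (· ≠ o) with hS
  have hinternal : ∀ k ∈ S, ∑ j ∈ S, p k j / μ k * ν k = ν k - ν k / μ k * p k o := by
    intro k hk
    have hμk := hμ0 k (mem_filter.1 hk).2
    rw [← sum_mul, ← sum_div, hS, filter_ne', sum_erase_eq_sub (mem_univ o), ← hμ]
    field_simp
  have hbalance : ∑ j ∈ S, ν j = ∑ j ∈ S, p o j + ∑ k ∈ S, (ν k - ν k / μ k * p k o) := by
    rw [sum_congr rfl fun j hj => htraffic j (mem_filter.1 hj).2, sum_add_distrib, sum_comm,
      sum_congr rfl hinternal]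
  rw [sum_sub_distrib] at hbalance
  linarith

theorem jackson_input_output_ratio_lt_one_general
    (d : ℕ) (p : Matrix (Fin (d + 1)) (Fin (d + 1)) ℝ)
    (hnn : ∀ i j, 0 ≤ p i j)
    (hirr : ∀ i j, ∃ n : ℕ, 0 < (p ^ n) i j)
    (μ ν : Fin (d + 1) → ℝ)
    (hμ : ∀ j, μ j = ∑ k, p j k)
    (htraffic : ∀ j : Fin (d + 1), j ≠ 0 →
      ν j = p 0 j + ∑ k ∈ univ.filter (fun k : Fin (d + 1) => k ≠ 0), (p k j / μ k) * ν k)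
    (hstab : ∀ i : Fin (d + 1), i ≠ 0 → ν i / μ i < 1) :
    (∑ j ∈ univ.filter (fun j : Fin (d + 1) => j ≠ 0), p 0 j) /
      (∑ j ∈ univ.filter (fun j : Fin (d + 1) => j ≠ 0), p j 0) < 1 := by
  have hμ0 : ∀ k, k ≠ 0 → μ k ≠ 0 := fun k hk =>
    (hμ k ▸ Matrix.sum_row_pos_of_irreducible hnn hirr hk).ne'
  rw [sum_inflow_eq_sum_utilization_mul_outflow 0 p μ ν hμ hμ0 htraffic]
  exact sum_mul_div_sum_lt_one _ _ _ (fun k _ => hnn k 0)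
    fun k hk => hstab k (mem_filter.1 hk).2

/-- Stability of a Jackson network implies that the input/output ratio `r` is
less than one. -/
theorem jackson_input_output_ratio_lt_one
    (d : ℕ) (p : Matrix (Fin (d + 1)) (Fin (d + 1)) ℝ)
    (hnn : ∀ i j, 0 ≤ p i j)
    (hsum : ∑ i, ∑ j, p i j = 1)
    (hdiag : ∀ i, p i i = 0)
    (hirr : ∀ i j, ∃ n : ℕ, 0 < (p ^ n) i j)
    (μ ν : Fin (d + 1) → ℝ)
    (hμ : ∀ j, μ j = ∑ k, p j k)
    (htraffic : ∀ j : Fin (d + 1), j ≠ 0 →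
      ν j = p 0 j + ∑ k ∈ univ.filter (fun k : Fin (d + 1) => k ≠ 0), (p k j / μ k) * ν k)
    (hstab : ∀ i : Fin (d + 1), i ≠ 0 → ν i / μ i < 1) :
    (∑ j ∈ univ.filter (fun j : Fin (d + 1) => j ≠ 0), p 0 j) /
      (∑ j ∈ univ.filter (fun j : Fin (d + 1) => j ≠ 0), p j 0) < 1 :=
  jackson_input_output_ratio_lt_one_general d p hnn hirr μ ν hμ htraffic hstab
end

section
/- For a two-dimensional Jackson network with p(2,0) > 0, the first queue's stability ν_1 < μ_1 holds if and only if r_1 < 1, where r_1 = (p(0,1) + (p(2,1)/p(2,0))(1 + p(1,0)p(2,1)/p(2,0) − μ_2)) / ((μ_2/p(2,0))(μ_2 p(1,0)/p(2,0) + p(1,2))) is the nontrivial third root of the reduced boundary characteristic polynomial p_2^r (whose other roots are 0 and 1). -/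
/-!
Solving the traffic equations gives `ν₁ Δ = μ₁ (μ₂ p(0,1) + p(2,1) p(0,2))` with
`Δ = μ₁ μ₂ - p(1,2) p(2,1) > 0`, so `ν₁ < μ₁` says `μ₂ p(0,1) + p(2,1) p(0,2) < Δ`.
On the other side, `Σ p = 1` turns the gap between the denominator and the numerator of `r₁`
into exactly this difference divided by `p(2,0)`, while the denominator itself is
`μ₂ Δ / p(2,0)² > 0`.
-/

theorem lt_iff_of_mul_eq_mul {ν μ Δ c : ℝ} (hμ : 0 < μ) (hΔ : 0 < Δ) (h : ν * Δ = μ * c) :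
    ν < μ ↔ c < Δ := by
  rw [← mul_lt_mul_iff_left₀ hΔ, h, mul_lt_mul_iff_right₀ hμ]

section TrafficEquations

variable {p01 p02 p10 p20 p12 p21 μ1 μ2 ν1 ν2 : ℝ}

theorem traffic_det_pos (h10 : 0 ≤ p10) (h20 : 0 < p20) (h21 : 0 ≤ p21)
    (hμ1 : μ1 = p10 + p12) (hμ2 : μ2 = p20 + p21) (hμ1pos : 0 < μ1) :
    0 < μ1 * μ2 - p12 * p21 := by
  have hΔ : μ1 * μ2 - p12 * p21 = μ1 * p20 + p10 * p21 := by subst hμ1 hμ2; ring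
  rw [hΔ]; positivity

theorem traffic_solution (hμ1 : μ1 ≠ 0) (hμ2 : μ2 ≠ 0)
    (hν1 : ν1 = p01 + p21 / μ2 * ν2) (hν2 : ν2 = p02 + p12 / μ1 * ν1) :
    ν1 * (μ1 * μ2 - p12 * p21) = μ1 * (μ2 * p01 + p21 * p02) := by
  have e1 : ν1 * μ2 = p01 * μ2 + p21 * ν2 := by rw [hν1]; field_simp
  have e2 : ν2 * μ1 = p02 * μ1 + p12 * ν1 := by rw [hν2]; field_simp
  linear_combination μ1 * e1 + p21 * e2

theorem boundary_root_lt_one_iff (h20 : 0 < p20) (hμ2pos : 0 < μ2)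
    (hΔ : 0 < μ1 * μ2 - p12 * p21) (hsum : p01 + p02 + p10 + p20 + p12 + p21 = 1)
    (hμ1 : μ1 = p10 + p12) (hμ2 : μ2 = p20 + p21) :
    (p01 + p21 / p20 * (1 + p10 * p21 / p20 - μ2)) /
        (μ2 / p20 * (μ2 * p10 / p20 + p12)) < 1 ↔
      μ2 * p01 + p21 * p02 < μ1 * μ2 - p12 * p21 := by
  have hden : μ2 / p20 * (μ2 * p10 / p20 + p12) = μ2 * (μ1 * μ2 - p12 * p21) / p20 ^ 2 := by
    subst hμ1 hμ2; field_simp; ring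
  have hgap : μ2 / p20 * (μ2 * p10 / p20 + p12) - (p01 + p21 / p20 * (1 + p10 * p21 / p20 - μ2))
      = (μ1 * μ2 - p12 * p21 - (μ2 * p01 + p21 * p02)) / p20 := by
    subst hμ1 hμ2; field_simp; linear_combination (p20 * p21) * hsum
  rw [div_lt_one (by rw [hden]; positivity), ← sub_pos, hgap, div_pos_iff_of_pos_right h20,
    sub_pos]

end TrafficEquations

theorem first_queue_stability_iff_r1_lt_one_general
    (p01 p02 p10 p20 p12 p21 μ1 μ2 ν1 ν2 : ℝ)
    (h10 : 0 ≤ p10) (h20 : 0 < p20)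
    (h21 : 0 ≤ p21)
    (hsum : p01 + p02 + p10 + p20 + p12 + p21 = 1)
    (hμ1 : μ1 = p10 + p12) (hμ2 : μ2 = p20 + p21)
    (hμ1pos : 0 < μ1)
    (hν1 : ν1 = p01 + p21 / μ2 * ν2) (hν2 : ν2 = p02 + p12 / μ1 * ν1) :
    ν1 < μ1 ↔
      (p01 + p21 / p20 * (1 + p10 * p21 / p20 - μ2)) /
        (μ2 / p20 * (μ2 * p10 / p20 + p12)) < 1 := by
  have hμ2pos : 0 < μ2 := by rw [hμ2]; linarith
  have hΔ := traffic_det_pos h10 h20 h21 hμ1 hμ2 hμ1pos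
  rw [lt_iff_of_mul_eq_mul hμ1pos hΔ (traffic_solution hμ1pos.ne' hμ2pos.ne' hν1 hν2),
    boundary_root_lt_one_iff h20 hμ2pos hΔ hsum hμ1 hμ2]

/-- For a two-dimensional Jackson network with `p(2,0) > 0`, stability of the
first queue `ν₁ < μ₁` holds if and only if the nontrivial root `r₁` of the
reduced boundary characteristic polynomial is less than one. -/
theorem first_queue_stability_iff_r1_lt_one
    (p01 p02 p10 p20 p12 p21 μ1 μ2 ν1 ν2 : ℝ)
    (h01 : 0 ≤ p01) (h02 : 0 ≤ p02) (h10 : 0 ≤ p10) (h20 : 0 < p20)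
    (h12 : 0 ≤ p12) (h21 : 0 ≤ p21)
    (hsum : p01 + p02 + p10 + p20 + p12 + p21 = 1)
    (hμ1 : μ1 = p10 + p12) (hμ2 : μ2 = p20 + p21)
    (hμ1pos : 0 < μ1)
    (hν1 : ν1 = p01 + p21 / μ2 * ν2) (hν2 : ν2 = p02 + p12 / μ1 * ν1) :
    ν1 < μ1 ↔
      (p01 + p21 / p20 * (1 + p10 * p21 / p20 - μ2)) /
        (μ2 / p20 * (μ2 * p10 / p20 + p12)) < 1 :=
  first_queue_stability_iff_r1_lt_one_general p01 p02 p10 p20 p12 p21 μ1 μ2 ν1 ν2 h10 h20 h21 hsum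
    hμ1 hμ2 hμ1pos hν1 hν2
end

section
/- Let (β,α_1), (β,α_2) be two distinct points on the characteristic surface H of a two-dimensional walk with β ≠ 0 and p(0,2) + β p(1,2) ≠ 0 (so α_1, α_2 are the two roots in α of the characteristic equation at this β). Define C(β,α) = μ_2 − (p(2,0)β/α + p(2,1)/α). Then h_β = C(β,α_2)[(β,α_1),·] − C(β,α_1)[(β,α_2),·] is a harmonic function of the constrained walk Y, where [(β,α),z] = β^{z(1)−z(2)} α^{z(2)}. -/
noncomputable section

/-- The log-linear function `[(β,α),z] = β^{z(1)−z(2)} α^{z(2)}`. -/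
def loglin (β α : ℂ) (z : ℤ × ℤ) : ℂ := β ^ (z.1 - z.2) * α ^ z.2

/-- `C(β,α) = μ₂ − (p(2,0)β/α + p(2,1)/α)`. -/
def Cfun (p20 p21 μ2 : ℝ) (β α : ℂ) : ℂ := (μ2 : ℂ) - ((p20 : ℂ) * β / α + p21 / α)

/-- The interior characteristic sum of `Y`: a point `(β,α)` lies on `H` iff
this equals `1`. -/
def charSumY (p01 p02 p10 p20 p12 p21 : ℝ) (β α : ℂ) : ℂ :=
  (p01 : ℂ) * β⁻¹ + p02 * β⁻¹ * α + p10 * β + p20 * β * α⁻¹ + p12 * α + p21 * α⁻¹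

lemma loglin_step (β α : ℂ) (hβ : β ≠ 0) (hα : α ≠ 0) (z : ℤ × ℤ) (a b : ℤ) :
    loglin β α (z + (a, b)) = loglin β α z * (β ^ (a - b) * α ^ b) := by
  simp only [loglin, Prod.fst_add, Prod.snd_add]
  rw [show z.1 + a - (z.2 + b) = (z.1 - z.2) + (a - b) by ring, zpow_add₀ hβ, zpow_add₀ hα]
  ring

lemma loglin_bdry (β α : ℂ) (z : ℤ × ℤ) (hz : z.2 = 0) : loglin β α z = β ^ z.1 := by
  simp [loglin, hz]

/-- Two distinct conjugate points `(β,α₁), (β,α₂)` on `H` yield the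
`Y`-harmonic function `h_β = C(β,α₂)[(β,α₁),·] − C(β,α₁)[(β,α₂),·]`. -/
theorem two_term_Y_harmonic
    (p01 p02 p10 p20 p12 p21 μ2 : ℝ)
    (h01 : 0 ≤ p01) (h02 : 0 ≤ p02) (h10 : 0 ≤ p10) (h20 : 0 ≤ p20)
    (h12 : 0 ≤ p12) (h21 : 0 ≤ p21)
    (hsum : p01 + p02 + p10 + p20 + p12 + p21 = 1)
    (hμ2 : μ2 = p20 + p21)
    (β α1 α2 : ℂ) (hβ : β ≠ 0) (hα1 : α1 ≠ 0) (hα2 : α2 ≠ 0) (hne : α1 ≠ α2)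
    (hden : (p02 : ℂ) + β * p12 ≠ 0)
    (hH1 : charSumY p01 p02 p10 p20 p12 p21 β α1 = 1)
    (hH2 : charSumY p01 p02 p10 p20 p12 p21 β α2 = 1)
    (h : ℤ × ℤ → ℂ)
    (hh : ∀ z, h z = Cfun p20 p21 μ2 β α2 * loglin β α1 z
        - Cfun p20 p21 μ2 β α1 * loglin β α2 z) :
    (∀ z : ℤ × ℤ, 0 < z.2 →
      h z = p01 * h (z + (-1, 0)) + p02 * h (z + (0, 1)) + p10 * h (z + (1, 0))
          + p20 * h (z + (0, -1)) + p12 * h (z + (1, 1))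
          + p21 * h (z + (-1, -1))) ∧
    (∀ z : ℤ × ℤ, z.2 = 0 →
      h z = μ2 * h z + p01 * h (z + (-1, 0)) + p02 * h (z + (0, 1))
          + p10 * h (z + (1, 0)) + p12 * h (z + (1, 1))) := by
  simp only [charSumY] at hH1 hH2
  constructor
  · intro z _
    simp only [hh, loglin_step β α1 hβ hα1, loglin_step β α2 hβ hα2, Cfun, show ((-1:ℤ) - 0) = -1 by norm_num, show ((0:ℤ) - 1) = -1 by norm_num,
      show ((1:ℤ) - 0) = 1 by norm_num, show ((0:ℤ) - (-1)) = 1 by norm_num,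
      show ((1:ℤ) - 1) = 0 by norm_num, show ((-1:ℤ) - (-1)) = 0 by norm_num,
      zpow_zero, zpow_one, zpow_neg_one, mul_one]
    linear_combination
      (-((((μ2 : ℂ) - ((p20 : ℂ) * β / α2 + p21 / α2)) * loglin β α1 z))) * hH1
      + (((μ2 : ℂ) - ((p20 : ℂ) * β / α1 + p21 / α1)) * loglin β α2 z) * hH2
  · intro z hz
    simp only [hh, loglin_step β α1 hβ hα1, loglin_step β α2 hβ hα2,
      loglin_bdry β α1 z hz, loglin_bdry β α2 z hz, Cfun, show ((-1:ℤ) - 0) = -1 by norm_num, show ((0:ℤ) - 1) = -1 by norm_num,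
      show ((1:ℤ) - 0) = 1 by norm_num, show ((0:ℤ) - (-1)) = 1 by norm_num,
      show ((1:ℤ) - 1) = 0 by norm_num, show ((-1:ℤ) - (-1)) = 0 by norm_num,
      zpow_zero, zpow_one, zpow_neg_one, mul_one]
    linear_combination
      (-((((μ2 : ℂ) - ((p20 : ℂ) * β / α2 + p21 / α2)) * β ^ z.1))) * hH1
      + (((μ2 : ℂ) - ((p20 : ℂ) * β / α1 + p21 / α1)) * β ^ z.1) * hH2

end
end

section
/- For a two-dimensional walk with p(0,2) = 0, p(1,2) ≠ 0, satisfying 𝛂(r,1) = (p(2,1) + r·p(2,0))/p(1,2) < 1 and the validity conditions on the characteristic roots, the conjugate point satisfies |𝛂(β_1(α),α)| < 1 for every α on the unit circle, where 𝛂(β,α) = (1/α)(p(2,0)β² + p(2,1)β)/(p(0,2) + βp(1,2)) and β_1(α) is the root with |β_1(α)| ≤ r. -/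
/-- For a two-dimensional walk with `p(0,2) = 0`, `p(1,2) > 0` and
`𝛂(r,1) = (p(2,1) + r·p(2,0))/p(1,2) < 1`, the conjugate point satisfies
`|𝛂(β₁(α),α)| < 1` for every `α` on the unit circle, where `β₁(α)` is the
root of the characteristic equation with `|β₁(α)| ≤ r`. -/
theorem conjugate_point_in_unit_disc
    (p01 p02 p10 p20 p12 p21 μ1 μ2 ν1 ν2 : ℝ)
    (h01 : 0 ≤ p01) (h02 : p02 = 0) (h10 : 0 ≤ p10) (h20 : 0 ≤ p20)
    (h12 : 0 < p12) (h21 : 0 ≤ p21)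
    (hsum : p01 + p02 + p10 + p20 + p12 + p21 = 1)
    (hμ1 : μ1 = p10 + p12) (hμ2 : μ2 = p20 + p21)
    (hμ1pos : 0 < μ1) (hμ2pos : 0 < μ2) (hout : 0 < p10 + p20)
    (hν1 : ν1 = p01 + p21 / μ2 * ν2) (hν2 : ν2 = p02 + p12 / μ1 * ν1)
    (hs1 : ν1 < μ1) (hs2 : ν2 < μ2)
    (r : ℝ) (hr : r = (p01 + p02) / (p10 + p20))
    (hconj1 : (p21 + r * p20) / p12 < 1) :
    ∀ α β1 : ℂ, ‖α‖ = 1 →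
      ((p10 : ℂ) * α + p20) * β1 ^ 2 + ((p12 : ℂ) * α ^ 2 + p21 - α) * β1
          + ((p02 : ℂ) * α ^ 2 + p01 * α) = 0 →
      ‖β1‖ ≤ r →
      ‖(1 / α) * (((p20 : ℂ) * β1 ^ 2 + p21 * β1) / ((p02 : ℂ) + β1 * p12))‖ < 1 := by
  intro α β1 hα heq hβ
  have hα0 : α ≠ 0 := by
    intro h; rw [h] at hα; simp at hα
  by_cases hb : β1 = 0
  · subst h02; simp [hb]
  · have hkey : ((p20 : ℂ) * β1 ^ 2 + p21 * β1) / ((p02 : ℂ) + β1 * p12)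
        = ((p20 : ℂ) * β1 + p21) / p12 := by
      subst h02
      have : ((p20 : ℂ) * β1 ^ 2 + p21 * β1) = β1 * ((p20 : ℂ) * β1 + p21) := by ring
      rw [this]
      rw [show ((0:ℝ) : ℂ) + β1 * p12 = β1 * p12 by push_cast; ring]
      rw [mul_div_mul_left _ _ hb]
    rw [hkey, norm_mul, norm_div, norm_div]
    have h1 : ‖(1:ℂ)‖ / ‖α‖ = 1 := by rw [hα]; simp
    rw [h1, one_mul]
    have hp12 : ‖(p12 : ℂ)‖ = p12 := by
      rw [Complex.norm_real, Real.norm_of_nonneg h12.le]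
    rw [hp12]
    rw [div_lt_one h12]
    calc ‖(p20 : ℂ) * β1 + p21‖ ≤ ‖(p20 : ℂ) * β1‖ + ‖(p21 : ℂ)‖ := norm_add_le _ _
      _ = p20 * ‖β1‖ + p21 := by
          rw [norm_mul, Complex.norm_real, Complex.norm_real,
            Real.norm_of_nonneg h20, Real.norm_of_nonneg h21]
      _ ≤ p20 * r + p21 := by
          have := mul_le_mul_of_nonneg_left hβ h20
          linarith
      _ < p12 := by
          rw [div_lt_one h12] at hconj1
          linarith
end

section
/- For the d-dimensional tandem walk with λ < μ_i for all i and pairwise distinct μ_i, and for each nonempty a ⊂ {1,...,d} with max a = d, define β*_a = ρ_d = λ/μ_d and α*_a(l) = 1 for l ≤ a(1), α*_a(l) = ρ_{a(j)} for a(j) < l ≤ a(j+1), α*_a(l) = ρ_{a(|a|)} for l > a(|a|). Then each point (β*_a, α*_a) lies on the characteristic surface H, i.e., λ/β*_a + μ_1 α*_a(2) + Σ_{j=2}^{d} μ_j α*_a(j+1)/α*_a(j) = 1 (with α*_a(d+1) := β*_a). -/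
/-! Each summand `μ_j α*(j+1)/α*(j)` equals `μ_j + λ/α*(j) - λ/α*(j+1)`: for `j ∉ a` the
ratio is `1`, and for `j ∈ a` one has `α*(j+1) = ρ_j` and `μ_j ρ_j = λ`. Summing over
`1 ≤ j ≤ d` telescopes to `Σ μ_j + λ/α*(1) - λ/α*(d+1) = Σ μ_j + λ - λ/ρ_d`, and the
term `λ/β* = λ/ρ_d` cancels the last one. -/

open Finset

noncomputable section

/-- `α*_a(l) = ρ_{max{i ∈ a : i < l}}`, equal to `1` when no element of `a`
lies below `l`.  This encodes: `α*_a(l) = 1` for `l ≤ a(1)`,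
`α*_a(l) = ρ_{a(j)}` for `a(j) < l ≤ a(j+1)` and `α*_a(l) = ρ_{a(|a|)}` for
`l > a(|a|)`. -/
def alphaStar (a : Finset ℕ) (ρ : ℕ → ℝ) (l : ℕ) : ℝ :=
  if h : (a.filter (fun i => i < l)).Nonempty
  then ρ ((a.filter (fun i => i < l)).max' h) else 1

section alphaStar

variable {a : Finset ℕ} {ρ : ℕ → ℝ}

lemma alphaStar_zero (a : Finset ℕ) (ρ : ℕ → ℝ) : alphaStar a ρ 0 = 1 := by
  simp [alphaStar]

lemma alphaStar_succ_of_mem {j : ℕ} (hj : j ∈ a) : alphaStar a ρ (j + 1) = ρ j := by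
  have hj' : j ∈ a.filter (· < j + 1) := mem_filter.mpr ⟨hj, j.lt_succ_self⟩
  rw [alphaStar, dif_pos ⟨j, hj'⟩]
  congr 1
  refine le_antisymm (max'_le _ _ _ fun i hi => ?_) (le_max' _ _ hj')
  exact Nat.lt_succ_iff.mp (mem_filter.mp hi).2

lemma alphaStar_succ_of_notMem {j : ℕ} (hj : j ∉ a) :
    alphaStar a ρ (j + 1) = alphaStar a ρ j := by
  have hfilter : a.filter (· < j + 1) = a.filter (· < j) :=
    filter_congr fun i hi => by
      have : i ≠ j := fun h => hj (h ▸ hi)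
      omega
  simp only [alphaStar, hfilter]

lemma alphaStar_ne_zero (hρ : ∀ i ∈ a, ρ i ≠ 0) (l : ℕ) : alphaStar a ρ l ≠ 0 := by
  unfold alphaStar
  split_ifs with h
  · exact hρ _ (mem_filter.mp (max'_mem _ h)).1
  · exact one_ne_zero

variable {μ : ℕ → ℝ} {lam : ℝ}

lemma mul_alphaStar_succ_div_add (hlam : lam ≠ 0) (hμρ : ∀ i ∈ a, μ i * ρ i = lam) (j : ℕ) :
    μ j * (alphaStar a ρ (j + 1) / alphaStar a ρ j) + lam / alphaStar a ρ (j + 1)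
      = μ j + lam / alphaStar a ρ j := by
  have hρ : ∀ i ∈ a, ρ i ≠ 0 := fun i hi h => hlam (by rw [← hμρ i hi, h, mul_zero])
  have hα := alphaStar_ne_zero hρ j
  by_cases hj : j ∈ a
  · rw [alphaStar_succ_of_mem hj, ← hμρ j hj]
    field_simp [hρ j hj]
    ring
  · rw [alphaStar_succ_of_notMem hj]
    field_simp

lemma sum_mul_alphaStar_succ_div (hlam : lam ≠ 0) (hμρ : ∀ i ∈ a, μ i * ρ i = lam)
    (h0 : 0 ∉ a) {n : ℕ} (hn : 1 ≤ n) :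
    ∑ j ∈ Icc 1 n, μ j * (alphaStar a ρ (j + 1) / alphaStar a ρ j)
      = ∑ j ∈ Icc 1 n, μ j + lam - lam / alphaStar a ρ (n + 1) := by
  have hα1 : alphaStar a ρ 1 = 1 := by
    rw [alphaStar_succ_of_notMem h0, alphaStar_zero]
  have hterm : ∀ j, μ j * (alphaStar a ρ (j + 1) / alphaStar a ρ j)
      = μ j - (lam / alphaStar a ρ (j + 1) - lam / alphaStar a ρ j) := fun j => by
    linarith [mul_alphaStar_succ_div_add hlam hμρ j]
  rw [sum_congr rfl fun j _ => hterm j, sum_sub_distrib, sum_Icc_sub hn (fun j => lam / alphaStar a ρ j), hα1, div_one]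
  ring

end alphaStar

theorem tandem_alphaStar_mem_charSurface_general
    (d : ℕ) (lam : ℝ) (μ : ℕ → ℝ)
    (hlam : 0 < lam) (hstab : ∀ i ∈ Finset.Icc 1 d, lam < μ i)
    (hsum : lam + ∑ i ∈ Finset.Icc 1 d, μ i = 1)
    (a : Finset ℕ) (ha : a ⊆ Finset.Icc 1 d) (hda : d ∈ a)
    (ρ : ℕ → ℝ) (hρ : ∀ i, ρ i = lam / μ i) :
    lam / ρ d + μ 1 * alphaStar a ρ 2 +
      ∑ j ∈ Finset.Icc 2 d, μ j * (alphaStar a ρ (j + 1) / alphaStar a ρ j) = 1 := by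
  have hd : 1 ≤ d := (mem_Icc.mp (ha hda)).1
  have h0 : 0 ∉ a := fun h => by simpa using ha h
  have hμρ : ∀ i ∈ a, μ i * ρ i = lam := fun i hi => by
    rw [hρ, mul_div_cancel₀ _ (hlam.trans (hstab i (ha hi))).ne']
  have hsplit : μ 1 * alphaStar a ρ 2 +
      ∑ j ∈ Icc 2 d, μ j * (alphaStar a ρ (j + 1) / alphaStar a ρ j)
        = ∑ j ∈ Icc 1 d, μ j * (alphaStar a ρ (j + 1) / alphaStar a ρ j) := by
    rw [← insert_Icc_add_one_left_eq_Icc hd, sum_insert (by simp),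
      alphaStar_succ_of_notMem h0, alphaStar_zero, div_one]
    rfl
  rw [add_assoc, hsplit, sum_mul_alphaStar_succ_div hlam.ne' hμρ h0 hd,
    alphaStar_succ_of_mem hda]
  linarith

/-- For the stable `d`-dimensional tandem walk with pairwise distinct service
rates, each point `(β*_a, α*_a)`, `a ⊆ {1,…,d}` with `d ∈ a`, lies on the
characteristic surface `H`:
`λ/β* + μ₁ α*(2) + Σ_{j=2}^d μ_j α*(j+1)/α*(j) = 1` (with `α*(d+1) = β* = ρ_d`). -/
theorem tandem_alphaStar_mem_charSurface
    (d : ℕ) (hd : 1 ≤ d) (lam : ℝ) (μ : ℕ → ℝ)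
    (hlam : 0 < lam) (hstab : ∀ i ∈ Finset.Icc 1 d, lam < μ i)
    (hdist : ∀ i ∈ Finset.Icc 1 d, ∀ j ∈ Finset.Icc 1 d, i ≠ j → μ i ≠ μ j)
    (hsum : lam + ∑ i ∈ Finset.Icc 1 d, μ i = 1)
    (a : Finset ℕ) (ha : a ⊆ Finset.Icc 1 d) (hda : d ∈ a)
    (ρ : ℕ → ℝ) (hρ : ∀ i, ρ i = lam / μ i) :
    lam / ρ d + μ 1 * alphaStar a ρ 2 +
      ∑ j ∈ Finset.Icc 2 d, μ j * (alphaStar a ρ (j + 1) / alphaStar a ρ j) = 1 :=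
  tandem_alphaStar_mem_charSurface_general d lam μ hlam hstab hsum a ha hda ρ hρ

end
end
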